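/- In the lcm-lattice L_J of the connected cut-set ideal J, the join of two monomials y^{F(π)} and y^{F(π')} corresponding to connected partitions π and π' is y^{F(π) ∪ F(π')}, and F(π)∪F(π') = F(π ∨ π') where π ∨ π' is the join in the dual connected partition lattice. -/

import Mathlib

open SimpleGraph
open scoped Classical

variable {V : Type*} [Fintype V] [DecidableEq V]

/-- `π` is a connected partition of `G`: every block (equivalence class) of `π`
induces a connected subgraph. -/
def ConnPart (G : SimpleGraph V) (π : Setoid V) : Prop :=
  ∀ c ∈ π.classes, (G.induce c).Connected

/-- `F(π)`: the set of edges of `G` whose endpoints lie in distinct blocks of `π`. -/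
def crossF (G : SimpleGraph V) (π : Setoid V) : Set (Sym2 V) :=
  {e | e ∈ G.edgeSet ∧ ∃ u v, e = s(u, v) ∧ ¬ π.r u v}

/-- Auxiliary graph: edges of `G` lying inside a block of the common refinement of
`π` and `π'`. -/
def meetGraph (G : SimpleGraph V) (π π' : Setoid V) : SimpleGraph V where
  Adj u v := G.Adj u v ∧ π.r u v ∧ π'.r u v
  symm := ⟨fun u v h => ⟨h.1.symm, π.iseqv.symm h.2.1, π'.iseqv.symm h.2.2⟩⟩
  loopless := ⟨fun u h => G.loopless.irrefl u h.1⟩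

/-- The common-connected-refinement of `π` and `π'`: its blocks are the connected
components of the subgraphs induced on the blocks of the common refinement. -/
def connMeet (G : SimpleGraph V) (π π' : Setoid V) : Setoid V :=
  (meetGraph G π π').reachableSetoid

/-- The squarefree monomial `y^S` in `k[y_e : e an edge]`. -/
noncomputable def yMon (k : Type*) [Field k] (S : Set (Sym2 V)) :
    MvPolynomial (Sym2 V) k :=
  MvPolynomial.monomial
    (Finsupp.equivFunOnFinite.symm fun e => if e ∈ S then 1 else 0) 1

/-!
A squarefree monomial `y^S` divides a polynomial exactly when the indicator of `S` is below every
exponent in its support, so `y^S` and `y^T` both divide `m` iff `y^(S ∪ T)` does: the lcm of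
squarefree monomials is the monomial of the union.

For the partitions, an edge `uv` crosses the connected meet of `π` and `π'` iff `u` and `v` are
separated by `π` or by `π'`: if they are in the same block of both, the edge `uv` itself joins them
in the graph whose components define the meet; conversely, paths in that graph stay inside a block
of `π` and of `π'`.
-/

namespace MvPolynomial

variable {σ R : Type*} [CommSemiring R]

theorem monomial_one_dvd_iff_forall_support_le {a : σ →₀ ℕ} {p : MvPolynomial σ R} :
    monomial a 1 ∣ p ↔ ∀ d ∈ p.support, a ≤ d := by
  constructor
  · rintro ⟨q, rfl⟩ d hd
    rw [mem_support_iff, coeff_monomial_mul'] at hd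
    by_contra h
    simp [h] at hd
  · intro h
    refine ⟨∑ d ∈ p.support, monomial (d - a) (p.coeff d), ?_⟩
    rw [Finset.mul_sum]
    conv_lhs => rw [p.as_sum]
    refine Finset.sum_congr rfl fun d hd => ?_
    rw [monomial_mul, one_mul, add_tsub_cancel_of_le (h d hd)]

theorem monomial_one_sup_dvd_iff {a b : σ →₀ ℕ} {p : MvPolynomial σ R} :
    monomial (a ⊔ b) 1 ∣ p ↔ monomial a 1 ∣ p ∧ monomial b 1 ∣ p := by
  simp only [monomial_one_dvd_iff_forall_support_le, sup_le_iff, ← forall₂_and]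

end MvPolynomial

open MvPolynomial

section Monomials

omit [DecidableEq V]

noncomputable def yExp (S : Set (Sym2 V)) : Sym2 V →₀ ℕ :=
  Finsupp.equivFunOnFinite.symm fun e => if e ∈ S then 1 else 0

theorem yMon_eq_monomial (k : Type*) [Field k] (S : Set (Sym2 V)) :
    yMon k S = monomial (yExp S) 1 :=
  rfl

theorem yExp_mono {S T : Set (Sym2 V)} (h : S ⊆ T) : yExp S ≤ yExp T := by
  intro e
  by_cases hS : e ∈ S
  · simp [yExp, hS, h hS]
  · simp [yExp, hS]

theorem yExp_union (S T : Set (Sym2 V)) : yExp (S ∪ T) = yExp S ⊔ yExp T := by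
  ext e
  by_cases hS : e ∈ S <;> by_cases hT : e ∈ T <;> simp [yExp, hS, hT]

variable (k : Type*) [Field k]

theorem yMon_dvd_yMon {S T : Set (Sym2 V)} (h : S ⊆ T) : yMon k S ∣ yMon k T := by
  rw [yMon_eq_monomial, yMon_eq_monomial, monomial_one_dvd_monomial_one]
  exact yExp_mono h

theorem yMon_union_dvd_iff (S T : Set (Sym2 V)) (m : MvPolynomial (Sym2 V) k) :
    yMon k (S ∪ T) ∣ m ↔ yMon k S ∣ m ∧ yMon k T ∣ m := by
  rw [yMon_eq_monomial, yExp_union, monomial_one_sup_dvd_iff]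
  rfl

end Monomials

section CrossingEdges

omit [Fintype V] [DecidableEq V]

variable (G : SimpleGraph V)

theorem crossF_anti {π σ : Setoid V} (h : π ≤ σ) : crossF G σ ⊆ crossF G π :=
  fun _ ⟨hE, u, v, he, hσ⟩ => ⟨hE, u, v, he, fun hπ => hσ (Setoid.le_def.mp h hπ)⟩

theorem connMeet_le_inf (π π' : Setoid V) : connMeet G π π' ≤ π ⊓ π' := by
  rintro u v ⟨w⟩
  induction w with
  | nil => exact (π ⊓ π').refl _
  | cons h _ ih => exact (π ⊓ π').trans (Setoid.inf_iff_and.mpr h.2) ih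

theorem crossF_connMeet_subset (π π' : Setoid V) :
    crossF G (connMeet G π π') ⊆ crossF G π ∪ crossF G π' := by
  rintro _ ⟨he, u, v, rfl, huv⟩
  by_contra hnot
  rw [Set.mem_union, not_or] at hnot
  have hπ : π.r u v := by_contra fun h => hnot.1 ⟨he, u, v, rfl, h⟩
  have hπ' : π'.r u v := by_contra fun h => hnot.2 ⟨he, u, v, rfl, h⟩
  exact huv (SimpleGraph.Adj.reachable (G := meetGraph G π π') ⟨he, hπ, hπ'⟩)

theorem crossF_union_eq_crossF_connMeet (π π' : Setoid V) :
    crossF G π ∪ crossF G π' = crossF G (connMeet G π π') := by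
  refine subset_antisymm (Set.union_subset ?_ ?_) (crossF_connMeet_subset G π π')
  · exact crossF_anti G ((connMeet_le_inf G π π').trans inf_le_left)
  · exact crossF_anti G ((connMeet_le_inf G π π').trans inf_le_right)

end CrossingEdges

theorem stmt_11_general (k : Type*) [Field k] (G : SimpleGraph V)
    (π π' : Setoid V) :
    yMon k (crossF G π) ∣ yMon k (crossF G π ∪ crossF G π') ∧
    yMon k (crossF G π') ∣ yMon k (crossF G π ∪ crossF G π') ∧
    (∀ m : MvPolynomial (Sym2 V) k,
      yMon k (crossF G π) ∣ m → yMon k (crossF G π') ∣ m →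
        yMon k (crossF G π ∪ crossF G π') ∣ m) ∧
    crossF G π ∪ crossF G π' = crossF G (connMeet G π π') :=
  ⟨yMon_dvd_yMon k Set.subset_union_left, yMon_dvd_yMon k Set.subset_union_right,
    fun m h h' => (yMon_union_dvd_iff k _ _ m).mpr ⟨h, h'⟩,
    crossF_union_eq_crossF_connMeet G π π'⟩

/-- In the lcm-lattice, the join of `y^{F(π)}` and `y^{F(π')}` is their lcm
`y^{F(π) ∪ F(π')}`, and `F(π) ∪ F(π') = F(π ∨ π')`, where the join `π ∨ π'` in
the dual connected partition lattice is the common-connected-refinement. -/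
theorem stmt_11 (k : Type*) [Field k] (G : SimpleGraph V) (hG : G.Connected)
    (π π' : Setoid V) (hπ : ConnPart G π) (hπ' : ConnPart G π') :
    yMon k (crossF G π) ∣ yMon k (crossF G π ∪ crossF G π') ∧
    yMon k (crossF G π') ∣ yMon k (crossF G π ∪ crossF G π') ∧
    (∀ m : MvPolynomial (Sym2 V) k,
      yMon k (crossF G π) ∣ m → yMon k (crossF G π') ∣ m →
        yMon k (crossF G π ∪ crossF G π') ∣ m) ∧
    crossF G π ∪ crossF G π' = crossF G (connMeet G π π') :=
  stmt_11_general k G π π'
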